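/- Let n ≥ 1 and let X be a multi-sorted topological structure in the signature of M̃_n. Define ≤ on X = X₀ ⊔ ⋯ ⊔ Xₙ by: x ≤ y iff either x,y ∈ X_k and x ≤ᵏ y for some k ∈ {0,…,n}, or x ∈ X_j, y ∈ X_k and x ≤ʲᵏ y for some 1 ≤ j < k ≤ n. Then X satisfies axioms (A4), (A5), (A6) and (A7) if and only if ⟨X; ≤, T⟩ is a Priestley space. -/

import Mathlib

/-!
STATEMENT 5: Let n ≥ 1 and let X be a multi-sorted topological structure in the
signature of M̃_n and let ≤ be the combined relation on X = X₀ ⊔ ⋯ ⊔ Xₙ (in our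
presentation, the combined relation r itself).  Then X satisfies axioms (A4),
(A5), (A6) and (A7) if and only if ⟨X; ≤, T⟩ is a Priestley space.
-/

namespace ExpandingBelnap
/-! ### Multi-sorted topological structures in the signature of the alter ego `M̃ₙ`

A multi-sorted topological structure `X = ⟨X₀ ⊔ ⋯ ⊔ Xₙ; {g_k}, {≤ᵏ}, {≤ʲᵏ}, T⟩` is
presented by a single carrier `C` (the disjoint union), a `sort` map `C → Fin (n+1)`
(each sort being clopen, which encodes the disjoint-union topology), a combined
operation `g : C → C` (equal to `g_k` on the sort-`k` part for `k ≥ 1` and to the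
identity on the sort-`0` part), and a combined relation `r : C → C → Prop`
(equal to `≤ᵏ` on pairs within sort `k` and to `≤ʲᵏ` on pairs from sort `j` to
sort `k` for `1 ≤ j < k`, and empty on all other pairs of sorts). -/

/-- `U` is an up-set for the relation `r`. -/
def IsUpset {C : Type} (r : C → C → Prop) (U : Set C) : Prop :=
  ∀ x ∈ U, ∀ y, r x y → y ∈ U

/-- `⟨C; r, T⟩` is a Priestley space: `r` is a partial order and the space is
compact and totally order-disconnected. -/
def IsPriestley (C : Type) [TopologicalSpace C] (r : C → C → Prop) : Prop :=
  (∀ x, r x x) ∧ (∀ x y, r x y → r y x → x = y) ∧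
    (∀ x y z, r x y → r y z → r x z) ∧ CompactSpace C ∧
    ∀ x y, ¬ r x y → ∃ U : Set C, IsClopen U ∧ IsUpset r U ∧ x ∈ U ∧ y ∉ U

/-- `(C, sort, g, r)` presents a multi-sorted topological structure in the signature
of `M̃ₙ`: the sorts are clopen (disjoint-union topology), `g` maps into sort `0` and
restricts to the identity on sort `0`, and the relation only relates pairs within a
sort or from sort `j` to sort `k` where `1 ≤ j < k`. -/
def IsMS {n : ℕ} {C : Type} [TopologicalSpace C]
    (sort : C → Fin (n + 1)) (g : C → C) (r : C → C → Prop) : Prop :=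
  (∀ k, IsClopen {x | sort x = k}) ∧
    (∀ x, sort (g x) = 0) ∧
    (∀ x, sort x = 0 → g x = x) ∧
    (∀ x y, r x y → sort x = sort y ∨ (0 < (sort x).val ∧ (sort x).val < (sort y).val))

/-- (A1): each `g_k : X_k → X₀` is continuous (`k ∈ [1, n]`). -/
def AxA1 {n : ℕ} {C : Type} [TopologicalSpace C]
    (sort : C → Fin (n + 1)) (g : C → C) : Prop :=
  ∀ k : Fin (n + 1), 0 < k.val → Continuous fun x : {x : C // sort x = k} => g x.1

/-- (A2): for `k ∈ [1, n]` and `x, y ∈ X_k`, `x ≤ᵏ y` implies `g_k x = g_k y`. -/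
def AxA2 {n : ℕ} {C : Type}
    (sort : C → Fin (n + 1)) (g : C → C) (r : C → C → Prop) : Prop :=
  ∀ x y, sort x = sort y → 0 < (sort x).val → r x y → g x = g y

/-- (A3): for `1 ≤ j < k`, `x ∈ X_j`, `y ∈ X_k`, `x ≤ʲᵏ y` implies `g_j x = g_k y`. -/
def AxA3 {n : ℕ} {C : Type}
    (sort : C → Fin (n + 1)) (g : C → C) (r : C → C → Prop) : Prop :=
  ∀ x y, 0 < (sort x).val → (sort x).val < (sort y).val → r x y → g x = g y

/-- (A4): for `1 ≤ j < k`, `x, y ∈ X_j`, `u, v ∈ X_k`: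
`x ≤ʲ y`, `y ≤ʲᵏ u`, `u ≤ᵏ v` imply `x ≤ʲᵏ v`. -/
def AxA4 {n : ℕ} {C : Type} (sort : C → Fin (n + 1)) (r : C → C → Prop) : Prop :=
  ∀ x y u v, 0 < (sort x).val → sort x = sort y → (sort y).val < (sort u).val →
    sort u = sort v → r x y → r y u → r u v → r x v

/-- (A5): for `1 ≤ j < k < l`, `x ∈ X_j`, `y ∈ X_k`, `z ∈ X_l`:
`x ≤ʲᵏ y` and `y ≤ᵏˡ z` imply `x ≤ʲˡ z`. -/
def AxA5 {n : ℕ} {C : Type} (sort : C → Fin (n + 1)) (r : C → C → Prop) : Prop :=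
  ∀ x y z, 0 < (sort x).val → (sort x).val < (sort y).val →
    (sort y).val < (sort z).val → r x y → r y z → r x z

/-- (A6): each `⟨X_k; ≤ᵏ, T_k⟩` is a Priestley space (`k ∈ [0, n]`). -/
def AxA6 {n : ℕ} {C : Type} [TopologicalSpace C]
    (sort : C → Fin (n + 1)) (r : C → C → Prop) : Prop :=
  ∀ k : Fin (n + 1), IsPriestley {x : C // sort x = k} fun a b => r a.1 b.1

/-- `U j, …, U k` is a mutually increasing family: each `U l` is a subset of `X_l`,
each `U l` is an up-set of `⟨X_l; ≤ˡ⟩`, and for `max(1,j) ≤ i ≤ l ≤ k`,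
`x ∈ U i`, `y ∈ X_l` and `x ≤ⁱˡ y` imply `y ∈ U l`. -/
def MutInc {n : ℕ} {C : Type} (sort : C → Fin (n + 1)) (r : C → C → Prop)
    (j k : Fin (n + 1)) (U : Fin (n + 1) → Set C) : Prop :=
  (∀ l, j ≤ l → l ≤ k → U l ⊆ {x | sort x = l}) ∧
    ∀ i l, j ≤ i → i ≤ l → l ≤ k → (i = l ∨ 0 < i.val) →
      ∀ x ∈ U i, ∀ y, sort y = l → r x y → y ∈ U l

/-- `U` is a clopen subset of the sort-`l` subspace `⟨X_l; T_l⟩`. -/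
def ClopenSort {n : ℕ} {C : Type} [TopologicalSpace C]
    (sort : C → Fin (n + 1)) (l : Fin (n + 1)) (U : Set C) : Prop :=
  IsClopen {z : {x : C // sort x = l} | z.1 ∈ U}

/-- (A7): for `1 ≤ j < k`, `x ∈ X_j`, `y ∈ X_k` with `x ≰ʲᵏ y`, there is a mutually
increasing family of clopen up-sets `U j, …, U k` with `x ∈ U j` and `y ∉ U k`. -/
def AxA7 {n : ℕ} {C : Type} [TopologicalSpace C]
    (sort : C → Fin (n + 1)) (r : C → C → Prop) : Prop :=
  ∀ j k : Fin (n + 1), 0 < j.val → j < k → ∀ x y, sort x = j → sort y = k → ¬ r x y →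
    ∃ U : Fin (n + 1) → Set C, MutInc sort r j k U ∧
      (∀ l, j ≤ l → l ≤ k → ClopenSort sort l (U l)) ∧ x ∈ U j ∧ y ∉ U k

/-- The conjunction of axioms (A1)–(A7). -/
def AxiomsA {n : ℕ} {C : Type} [TopologicalSpace C]
    (sort : C → Fin (n + 1)) (g : C → C) (r : C → C → Prop) : Prop :=
  AxA1 sort g ∧ AxA2 sort g r ∧ AxA3 sort g r ∧ AxA4 sort r ∧ AxA5 sort r ∧
    AxA6 sort r ∧ AxA7 sort r

/-!
Since `r` never decreases the sort and the sorts are clopen, `sort` is continuous into a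
discrete space and the preimage of an upper set of sorts is a clopen up-set. Reflexivity,
antisymmetry and compactness of the sum come from the summands (A6), transitivity across sorts
from (A4) and (A5). To separate `x ≰ y` with `sort y = k`: if `sort x = k`, a clopen up-set of
`X_k` (A6), and if `0 < sort x < k`, the union of a mutually increasing family (A7), becomes a
global clopen up-set once all points of sort `> k` are added; the remaining pairs are
separated by `X₀` or by the points of sort `≥ sort x`. Conversely, a Priestley order restricts
to the closed sorts, and a separating clopen up-set cut down to the sorts is a mutually
increasing family.
-/

def ClopenUpsetSeparates {C : Type} [TopologicalSpace C] (r : C → C → Prop) (x y : C) : Prop :=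
  ∃ U : Set C, IsClopen U ∧ IsUpset r U ∧ x ∈ U ∧ y ∉ U

lemma isClopen_image_val {C : Type} [TopologicalSpace C] {p : C → Prop}
    (hp : IsClopen {x | p x}) {W : Set {x // p x}} (hW : IsClopen W) :
    IsClopen (Subtype.val '' W) :=
  ⟨hp.1.isClosedMap_subtype_val W hW.1, hp.2.isOpenMap_subtype_val W hW.2⟩

lemma isPriestley_subtype {C : Type} [TopologicalSpace C] {r : C → C → Prop}
    (h : IsPriestley C r) {p : C → Prop} (hp : IsClosed {x | p x}) :
    IsPriestley {x // p x} fun a b => r a.1 b.1 := by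
  obtain ⟨hrefl, hanti, htrans, hcompact, hsep⟩ := h
  refine ⟨fun a => hrefl a, fun a b hab hba => Subtype.ext (hanti _ _ hab hba),
    fun a b c => htrans a b c, isCompact_iff_compactSpace.mp hp.isCompact, fun a b hab => ?_⟩
  obtain ⟨U, hU, hUup, haU, hbU⟩ := hsep a b hab
  exact ⟨Subtype.val ⁻¹' U, hU.preimage continuous_subtype_val,
    fun c hc d hcd => hUup c hc d hcd, haU, hbU⟩

lemma compactSpace_of_compactSpace_fibres {C ι : Type} [TopologicalSpace C] [Finite ι]
    (f : C → ι) (h : ∀ i, CompactSpace {x // f x = i}) : CompactSpace C := by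
  have hfibre (i : ι) : IsCompact {x | f x = i} := isCompact_iff_compactSpace.mpr (h i)
  have hcover : (Set.univ : Set C) = ⋃ i, {x | f x = i} := by
    ext x
    simp
  rw [← isCompact_univ_iff, hcover]
  exact isCompact_iUnion hfibre

section Sorted

variable {n : ℕ} {C : Type} {sort : C → Fin (n + 1)} {r : C → C → Prop}

/-- The last clause of `IsMS`. -/
def RespectsSorts (sort : C → Fin (n + 1)) (r : C → C → Prop) : Prop :=
  ∀ x y, r x y → sort x = sort y ∨ (0 < (sort x).val ∧ (sort x).val < (sort y).val)

namespace RespectsSorts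

lemma sort_le (hr : RespectsSorts sort r) {x y : C} (hxy : r x y) : sort x ≤ sort y := by
  rcases hr x y hxy with h | ⟨-, h⟩
  · exact h.le
  · exact Fin.le_def.mpr h.le

lemma isUpset_preimage (hr : RespectsSorts sort r) {s : Set (Fin (n + 1))} (hs : IsUpperSet s) :
    IsUpset r (sort ⁻¹' s) :=
  fun _ hx _ hxy => hs (hr.sort_le hxy) hx

lemma isUpset_preimage_zero (hr : RespectsSorts sort r) : IsUpset r (sort ⁻¹' {0}) := by
  intro x hx y hxy
  rcases hr x y hxy with h | ⟨h, -⟩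
  · exact h.symm.trans hx
  · simp_all

lemma isUpset_union_preimage_Ioi (hr : RespectsSorts sort r) {V : Set C} {k : Fin (n + 1)}
    (hV : ∀ z ∈ V, ∀ z', r z z' → sort z' ≤ k → z' ∈ V) :
    IsUpset r (V ∪ sort ⁻¹' Set.Ioi k) := by
  rintro z (hz | hz) z' hzz'
  · by_cases hk : sort z' ≤ k
    · exact Or.inl (hV z hz z' hzz' hk)
    · exact Or.inr (not_le.mp hk)
  · exact Or.inr (lt_of_lt_of_le hz (hr.sort_le hzz'))

end RespectsSorts

variable [TopologicalSpace C]

lemma isClopen_preimage_sort (hclop : ∀ k, IsClopen {x | sort x = k}) (s : Set (Fin (n + 1))) :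
    IsClopen (sort ⁻¹' s) :=
  (isClopen_discrete s).preimage (continuous_discrete_rng.mpr fun k => (hclop k).2)

lemma rel_trans_of_axioms (hr : RespectsSorts sort r) (h4 : AxA4 sort r) (h5 : AxA5 sort r)
    (h6 : AxA6 sort r) {x y z : C} (hxy : r x y) (hyz : r y z) : r x z := by
  have hrefl (w : C) : r w w := (h6 (sort w)).1 ⟨w, rfl⟩
  rcases hr x y hxy with hsxy | ⟨hx, hsxy⟩ <;> rcases hr y z hyz with hsyz | ⟨hy, hsyz⟩
  · exact (h6 (sort x)).2.2.1 ⟨x, rfl⟩ ⟨y, hsxy.symm⟩ ⟨z, (hsxy.trans hsyz).symm⟩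
      hxy hyz
  · exact h4 x y z z (hsxy ▸ hy) hsxy hsyz rfl hxy hyz (hrefl z)
  · exact h4 x x y z hx rfl hsxy hsyz (hrefl x) hxy hyz
  · exact h5 x y z hx hsxy hsyz hxy hyz

lemma eq_of_rel_of_rel (hr : RespectsSorts sort r) (h6 : AxA6 sort r) {x y : C}
    (hxy : r x y) (hyx : r y x) : x = y := by
  have hs : sort x = sort y := le_antisymm (hr.sort_le hxy) (hr.sort_le hyx)
  exact congrArg Subtype.val ((h6 (sort x)).2.1 ⟨x, rfl⟩ ⟨y, hs.symm⟩ hxy hyx)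

lemma clopenUpsetSeparates_of_sort_eq (hclop : ∀ k, IsClopen {x | sort x = k})
    (hr : RespectsSorts sort r) (h6 : AxA6 sort r) {x y : C} (hs : sort x = sort y)
    (hxy : ¬ r x y) : ClopenUpsetSeparates r x y := by
  obtain ⟨W, hW, hWup, hxW, hyW⟩ := (h6 (sort x)).2.2.2.2 ⟨x, rfl⟩ ⟨y, hs.symm⟩ hxy
  refine ⟨Subtype.val '' W ∪ sort ⁻¹' Set.Ioi (sort x),
    (isClopen_image_val (hclop _) hW).union (isClopen_preimage_sort hclop _),
    hr.isUpset_union_preimage_Ioi ?_, Or.inl ⟨_, hxW, rfl⟩, ?_⟩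
  · rintro _ ⟨w, hw, rfl⟩ z hwz hz
    have hzs : sort z = sort x := le_antisymm hz (w.2 ▸ hr.sort_le hwz)
    exact ⟨⟨z, hzs⟩, hWup w hw ⟨z, hzs⟩ hwz, rfl⟩
  · rintro (⟨w, hw, hwy⟩ | hy)
    · have hwy' : w = ⟨y, hs.symm⟩ := Subtype.ext hwy
      exact hyW (hwy' ▸ hw)
    · exact (ne_of_lt hy) hs

lemma clopenUpsetSeparates_of_sort_lt (hclop : ∀ k, IsClopen {x | sort x = k})
    (hr : RespectsSorts sort r) (h7 : AxA7 sort r) {x y : C} (hx : 0 < (sort x).val)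
    (hs : sort x < sort y) (hxy : ¬ r x y) : ClopenUpsetSeparates r x y := by
  obtain ⟨U, ⟨hUsort, hUinc⟩, hUclopen, hxU, hyU⟩ :=
    h7 (sort x) (sort y) hx hs x y rfl rfl hxy
  have hUi (i : Fin (n + 1)) (hi : i ∈ Set.Icc (sort x) (sort y)) : IsClopen (U i) := by
    convert isClopen_image_val (hclop i) (hUclopen i hi.1 hi.2) using 1
    ext z
    refine ⟨fun hz => ⟨⟨z, hUsort i hi.1 hi.2 hz⟩, hz, rfl⟩, ?_⟩
    rintro ⟨w, hw, rfl⟩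
    exact hw
  refine ⟨(⋃ i ∈ Set.Icc (sort x) (sort y), U i) ∪ sort ⁻¹' Set.Ioi (sort y),
    ((Set.toFinite _).isClopen_biUnion hUi).union (isClopen_preimage_sort hclop _),
    hr.isUpset_union_preimage_Ioi ?_, Or.inl (Set.mem_biUnion ⟨le_rfl, hs.le⟩ hxU), ?_⟩
  · intro z hz z' hzz' hz'
    obtain ⟨i, hi, hzi⟩ := Set.mem_iUnion₂.mp hz
    have hsz : sort z = i := hUsort i hi.1 hi.2 hzi
    have hiz' : i ≤ sort z' := hsz ▸ hr.sort_le hzz'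
    have hcross : i = sort z' ∨ 0 < i.val := by
      rcases hr z z' hzz' with h | ⟨h, -⟩
      · exact Or.inl (hsz ▸ h)
      · exact Or.inr (hsz ▸ h)
    exact Set.mem_biUnion ⟨hi.1.trans hiz', hz'⟩
      (hUinc i (sort z') hi.1 hiz' hz' hcross z hzi z' rfl hzz')
  · rintro (hy | hy)
    · obtain ⟨i, hi, hyi⟩ := Set.mem_iUnion₂.mp hy
      exact hyU (hUsort i hi.1 hi.2 hyi ▸ hyi)
    · exact lt_irrefl (sort y) hy

lemma clopenUpsetSeparates_of_sort_eq_zero (hclop : ∀ k, IsClopen {x | sort x = k})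
    (hr : RespectsSorts sort r) {x y : C} (hx : sort x = 0) (hy : sort y ≠ 0) :
    ClopenUpsetSeparates r x y :=
  ⟨sort ⁻¹' {0}, isClopen_preimage_sort hclop _, hr.isUpset_preimage_zero, hx, hy⟩

lemma clopenUpsetSeparates_of_sort_gt (hclop : ∀ k, IsClopen {x | sort x = k})
    (hr : RespectsSorts sort r) {x y : C} (hs : sort y < sort x) :
    ClopenUpsetSeparates r x y :=
  ⟨sort ⁻¹' Set.Ici (sort x), isClopen_preimage_sort hclop _,
    hr.isUpset_preimage (isUpperSet_Ici _), le_refl (sort x), not_le.mpr hs⟩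

lemma clopenUpsetSeparates_of_not_rel (hclop : ∀ k, IsClopen {x | sort x = k})
    (hr : RespectsSorts sort r) (h6 : AxA6 sort r) (h7 : AxA7 sort r) {x y : C}
    (hxy : ¬ r x y) : ClopenUpsetSeparates r x y := by
  rcases lt_trichotomy (sort x) (sort y) with hs | hs | hs
  · by_cases hx : sort x = 0
    · exact clopenUpsetSeparates_of_sort_eq_zero hclop hr hx (hx ▸ hs).ne'
    · exact clopenUpsetSeparates_of_sort_lt hclop hr h7 (Fin.pos_iff_ne_zero.mpr hx) hs hxy
  · exact clopenUpsetSeparates_of_sort_eq hclop hr h6 hs hxy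
  · exact clopenUpsetSeparates_of_sort_gt hclop hr hs

theorem isPriestley_of_axioms (hclop : ∀ k, IsClopen {x | sort x = k})
    (hr : RespectsSorts sort r) (h4 : AxA4 sort r) (h5 : AxA5 sort r) (h6 : AxA6 sort r)
    (h7 : AxA7 sort r) : IsPriestley C r :=
  ⟨fun x => (h6 (sort x)).1 ⟨x, rfl⟩, fun _ _ => eq_of_rel_of_rel hr h6,
    fun _ _ _ => rel_trans_of_axioms hr h4 h5 h6,
    compactSpace_of_compactSpace_fibres sort fun k => (h6 k).2.2.2.1,
    fun _ _ => clopenUpsetSeparates_of_not_rel hclop hr h6 h7⟩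

namespace IsPriestley

lemma axA4 (h : IsPriestley C r) : AxA4 sort r :=
  fun _ _ _ _ _ _ _ _ hxy hyu huv => h.2.2.1 _ _ _ (h.2.2.1 _ _ _ hxy hyu) huv

lemma axA5 (h : IsPriestley C r) : AxA5 sort r :=
  fun _ _ _ _ _ _ hxy hyz => h.2.2.1 _ _ _ hxy hyz

lemma axA6 (h : IsPriestley C r) (hclop : ∀ k, IsClopen {x | sort x = k}) : AxA6 sort r :=
  fun k => isPriestley_subtype h (hclop k).1

lemma axA7 (h : IsPriestley C r) (hclop : ∀ k, IsClopen {x | sort x = k}) : AxA7 sort r := by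
  intro j k _ _ x y hx _ hxy
  obtain ⟨U, hU, hUup, hxU, hyU⟩ := h.2.2.2.2 x y hxy
  refine ⟨fun l => U ∩ sort ⁻¹' {l},
    ⟨fun l _ _ => Set.inter_subset_right,
      fun _ _ _ _ _ _ z hz w hw hzw => ⟨hUup z hz.1 w hzw, hw⟩⟩,
    fun l _ _ => (hU.inter (hclop l)).preimage continuous_subtype_val, ⟨hxU, hx⟩,
    fun hy => hyU hy.1⟩

end IsPriestley

end Sorted

theorem statement5_general (n : ℕ) (C : Type) [TopologicalSpace C]
    (sort : C → Fin (n + 1)) (g : C → C) (r : C → C → Prop)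
    (hMS : IsMS sort g r) :
    (AxA4 sort r ∧ AxA5 sort r ∧ AxA6 sort r ∧ AxA7 sort r) ↔
      IsPriestley C r := by
  obtain ⟨hclop, -, -, hr⟩ := hMS
  exact ⟨fun ⟨h4, h5, h6, h7⟩ => isPriestley_of_axioms hclop hr h4 h5 h6 h7,
    fun h => ⟨h.axA4, h.axA5, h.axA6 hclop, h.axA7 hclop⟩⟩

theorem statement5 (n : ℕ) (hn : 1 ≤ n) (C : Type) [TopologicalSpace C]
    (sort : C → Fin (n + 1)) (g : C → C) (r : C → C → Prop)
    (hMS : IsMS sort g r) :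
    (AxA4 sort r ∧ AxA5 sort r ∧ AxA6 sort r ∧ AxA7 sort r) ↔
      IsPriestley C r :=
  statement5_general n C sort g r hMS

end ExpandingBelnap
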